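/- arXiv:2304.12017 — 3 statements merged into one kernel-verified Lean document; each statement's English description precedes it below -/
import Mathlib

section
/- If f is a C² solution of the linear Vlasov equation ∂_t f + v·∇_x f + x·∇_v f = 0, then for each of the vector fields Z ∈ {U_i, S_i, L, R_{ij}}, the function Zf is again a solution of the same equation. -/
/-! The transport operator is the derivative along the vector field `X(t,x,v) = (1, v, x)`.
For a `C²` function the commutator of the derivatives along two vector fields is the derivative
along their Lie bracket, so `X(Zf) = Z(Xf) + [X,Z]f = 0` as soon as `Xf = 0` and `[X,Z] = 0`.
All four fields commute with `X`: `L` and `R_{ij}` are of the form `(x,v) ↦ (Ax, Av)` and so commute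
with the swap `(x,v) ↦ (v,x)`, while `(e_i, ±e_i)` is an eigenvector of the swap with eigenvalue
`±1`, which the factor `e^{±t}` compensates. -/

/-- Partial derivative in time of `f(t,x,v)`. -/
noncomputable def Dt {n : ℕ} (f : ℝ → (Fin n → ℝ) → (Fin n → ℝ) → ℝ) :
    ℝ → (Fin n → ℝ) → (Fin n → ℝ) → ℝ :=
  fun t x v => deriv (fun s => f s x v) t

/-- Partial derivative `∂_{x^i}` of `f(t,x,v)`. -/
noncomputable def Dx {n : ℕ} (i : Fin n) (f : ℝ → (Fin n → ℝ) → (Fin n → ℝ) → ℝ) :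
    ℝ → (Fin n → ℝ) → (Fin n → ℝ) → ℝ :=
  fun t x v => deriv (fun s => f t (Function.update x i s) v) (x i)

/-- Partial derivative `∂_{v^i}` of `f(t,x,v)`. -/
noncomputable def Dv {n : ℕ} (i : Fin n) (f : ℝ → (Fin n → ℝ) → (Fin n → ℝ) → ℝ) :
    ℝ → (Fin n → ℝ) → (Fin n → ℝ) → ℝ :=
  fun t x v => deriv (fun s => f t x (Function.update v i s)) (v i)

/-- The transport operator `∂_t + X = ∂_t + v·∇_x + x·∇_v`. -/
noncomputable def Tphi {n : ℕ} (f : ℝ → (Fin n → ℝ) → (Fin n → ℝ) → ℝ) :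
    ℝ → (Fin n → ℝ) → (Fin n → ℝ) → ℝ :=
  fun t x v => Dt f t x v + (∑ i, v i * Dx i f t x v) + (∑ i, x i * Dv i f t x v)

/-- Unstable vector field `U_i = e^t(∂_{x^i} + ∂_{v^i})`. -/
noncomputable def Uop {n : ℕ} (i : Fin n) (f : ℝ → (Fin n → ℝ) → (Fin n → ℝ) → ℝ) :
    ℝ → (Fin n → ℝ) → (Fin n → ℝ) → ℝ :=
  fun t x v => Real.exp t * (Dx i f t x v + Dv i f t x v)

/-- Stable vector field `S_i = e^{-t}(∂_{x^i} − ∂_{v^i})`. -/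
noncomputable def Sop {n : ℕ} (i : Fin n) (f : ℝ → (Fin n → ℝ) → (Fin n → ℝ) → ℝ) :
    ℝ → (Fin n → ℝ) → (Fin n → ℝ) → ℝ :=
  fun t x v => Real.exp (-t) * (Dx i f t x v - Dv i f t x v)

/-- Scaling vector field `L = Σᵢ (x^i ∂_{x^i} + v^i ∂_{v^i})`. -/
noncomputable def Lop {n : ℕ} (f : ℝ → (Fin n → ℝ) → (Fin n → ℝ) → ℝ) :
    ℝ → (Fin n → ℝ) → (Fin n → ℝ) → ℝ :=
  fun t x v => ∑ i, (x i * Dx i f t x v + v i * Dv i f t x v)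

/-- Rotation vector field `R_{ij}`. -/
noncomputable def Rop {n : ℕ} (i j : Fin n) (f : ℝ → (Fin n → ℝ) → (Fin n → ℝ) → ℝ) :
    ℝ → (Fin n → ℝ) → (Fin n → ℝ) → ℝ :=
  fun t x v => x i * Dx j f t x v - x j * Dx i f t x v
    + v i * Dv j f t x v - v j * Dv i f t x v

open VectorField ContinuousLinearMap

section General

variable {𝕜 E F : Type*} [NontriviallyNormedField 𝕜] [NormedAddCommGroup E] [NormedSpace 𝕜 E]
  [NormedAddCommGroup F] [NormedSpace 𝕜 F]

theorem fderiv_apply_eq_zero_of_lieBracket_eq_zero {f : E → F} {V W : E → E} {x : E}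
    {n : WithTop ℕ∞} (hf : ContDiffAt 𝕜 n f x) (hn : minSmoothness 𝕜 2 ≤ n)
    (hV : DifferentiableAt 𝕜 V x) (hW : DifferentiableAt 𝕜 W x)
    (hfV : ∀ y, fderiv 𝕜 f y (V y) = 0) (hVW : lieBracket 𝕜 V W x = 0) :
    fderiv 𝕜 (fun y ↦ fderiv 𝕜 f y (W y)) x (V x) = 0 := by
  have h := fderiv_apply_lieBracket hf hn hW hV
  simpa [hVW, hfV, eq_comm] using h

end General

section VectorFields

variable {E : Type*} [NormedAddCommGroup E] [NormedSpace ℝ E]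

def vlasovField (q : ℝ × E × E) : ℝ × E × E := (1, q.2.2, q.2.1)

theorem differentiable_vlasovField : Differentiable ℝ (vlasovField (E := E)) := by
  unfold vlasovField
  fun_prop

theorem fderiv_vlasovField_apply (q w : ℝ × E × E) :
    fderiv ℝ vlasovField q w = (0, w.2.2, w.2.1) := by
  have h : HasFDerivAt (vlasovField (E := E)) ((0 : ℝ × E × E →L[ℝ] ℝ).prod
      ((snd ℝ E E ∘L snd ℝ ℝ (E × E)).prod (fst ℝ E E ∘L snd ℝ ℝ (E × E)))) q :=
    (hasFDerivAt_const _ _).prodMk (hasFDerivAt_snd.snd.prodMk hasFDerivAt_snd.fst)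
  simp [h.fderiv]

theorem lieBracket_vlasovField_exp_smul {s : ℝ} {a b : E} (hb : b = s • a) (ha : a = s • b)
    (q : ℝ × E × E) :
    lieBracket ℝ vlasovField (fun q : ℝ × E × E ↦ Real.exp (s * q.1) • ((0 : ℝ), a, b)) q = 0 := by
  have h := ((hasFDerivAt_fst (𝕜 := ℝ) (p := q)).const_mul s).exp
  rw [lieBracket, fderiv_vlasovField_apply, fderiv_smul_const (by fun_prop), h.fderiv]
  simp [vlasovField, mul_smul, ← hb, ← ha]

theorem lieBracket_vlasovField_prodMap (A : E →L[ℝ] E) (q : ℝ × E × E) :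
    lieBracket ℝ vlasovField (fun q : ℝ × E × E ↦ ((0 : ℝ), A q.2.1, A q.2.2)) q = 0 := by
  have h : HasFDerivAt (fun q : ℝ × E × E ↦ ((0 : ℝ), A q.2.1, A q.2.2)) ((0 : ℝ × E × E →L[ℝ] ℝ).prod
      ((A ∘L fst ℝ E E ∘L snd ℝ ℝ (E × E)).prod (A ∘L snd ℝ E E ∘L snd ℝ ℝ (E × E)))) q :=
    (hasFDerivAt_const _ _).prodMk
      ((A.hasFDerivAt.comp q hasFDerivAt_snd.fst).prodMk (A.hasFDerivAt.comp q hasFDerivAt_snd.snd))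
  simp [lieBracket, h.fderiv, fderiv_vlasovField_apply, vlasovField]

end VectorFields

section Vlasov

variable {n : ℕ}

abbrev PhaseSpace (n : ℕ) : Type := ℝ × (Fin n → ℝ) × (Fin n → ℝ)

def uncurry3 (g : ℝ → (Fin n → ℝ) → (Fin n → ℝ) → ℝ) (q : PhaseSpace n) : ℝ :=
  g q.1 q.2.1 q.2.2

variable {g : ℝ → (Fin n → ℝ) → (Fin n → ℝ) → ℝ} {t : ℝ} {x v : Fin n → ℝ}

theorem Dt_eq_fderiv (hg : DifferentiableAt ℝ (uncurry3 g) (t, x, v)) :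
    Dt g t x v = fderiv ℝ (uncurry3 g) (t, x, v) (1, 0, 0) := by
  have h : HasDerivAt (fun s : ℝ ↦ ((s, x, v) : PhaseSpace n)) (1, 0, 0) t :=
    (hasDerivAt_id t).prodMk (hasDerivAt_const _ _)
  exact (hg.hasFDerivAt.comp_hasDerivAt t h).deriv

theorem Dx_eq_fderiv (i : Fin n) (hg : DifferentiableAt ℝ (uncurry3 g) (t, x, v)) :
    Dx i g t x v = fderiv ℝ (uncurry3 g) (t, x, v) (0, Pi.single i 1, 0) := by
  have h : HasDerivAt (fun s : ℝ ↦ ((t, Function.update x i s, v) : PhaseSpace n))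
      (0, Pi.single i 1, 0) (x i) :=
    (hasDerivAt_const _ _).prodMk ((hasDerivAt_update x i (x i)).prodMk (hasDerivAt_const _ _))
  rw [← Function.update_eq_self i x] at hg
  have h' := hg.hasFDerivAt.comp_hasDerivAt _ h
  rw [Function.update_eq_self] at h'
  exact h'.deriv

theorem Dv_eq_fderiv (i : Fin n) (hg : DifferentiableAt ℝ (uncurry3 g) (t, x, v)) :
    Dv i g t x v = fderiv ℝ (uncurry3 g) (t, x, v) (0, 0, Pi.single i 1) := by
  have h : HasDerivAt (fun s : ℝ ↦ ((t, x, Function.update v i s) : PhaseSpace n))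
      (0, 0, Pi.single i 1) (v i) :=
    (hasDerivAt_const _ _).prodMk ((hasDerivAt_const _ _).prodMk (hasDerivAt_update v i (v i)))
  rw [← Function.update_eq_self i v] at hg
  have h' := hg.hasFDerivAt.comp_hasDerivAt _ h
  rw [Function.update_eq_self] at h'
  exact h'.deriv

theorem fderiv_uncurry3_apply (hg : DifferentiableAt ℝ (uncurry3 g) (t, x, v)) (w : PhaseSpace n) :
    fderiv ℝ (uncurry3 g) (t, x, v) w =
      w.1 * Dt g t x v + ∑ k, w.2.1 k * Dx k g t x v + ∑ k, w.2.2 k * Dv k g t x v := by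
  have hw : w = w.1 • ((1 : ℝ), (0 : Fin n → ℝ), (0 : Fin n → ℝ))
      + ∑ k, w.2.1 k • ((0 : ℝ), Pi.single k (1 : ℝ), (0 : Fin n → ℝ))
      + ∑ k, w.2.2 k • ((0 : ℝ), (0 : Fin n → ℝ), Pi.single k (1 : ℝ)) := by
    ext <;> simp [Prod.fst_sum, Prod.snd_sum, Finset.sum_apply, Pi.single_apply]
  conv_lhs => rw [hw]
  simp only [map_add, map_sum, map_smul, smul_eq_mul, Dt_eq_fderiv hg, Dx_eq_fderiv _ hg,
    Dv_eq_fderiv _ hg]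

theorem Tphi_eq_fderiv (hg : DifferentiableAt ℝ (uncurry3 g) (t, x, v)) :
    Tphi g t x v = fderiv ℝ (uncurry3 g) (t, x, v) (vlasovField (t, x, v)) := by
  simp [fderiv_uncurry3_apply hg, Tphi, vlasovField]

theorem Tphi_eq_zero_of_lieBracket_eq_zero {f : ℝ → (Fin n → ℝ) → (Fin n → ℝ) → ℝ}
    (hf : ContDiff ℝ 2 (uncurry3 f)) (hsol : ∀ t x v, Tphi f t x v = 0)
    {W : PhaseSpace n → PhaseSpace n} (hW : DifferentiableAt ℝ W (t, x, v))
    (hbr : lieBracket ℝ vlasovField W (t, x, v) = 0)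
    (hg : uncurry3 g = fun q ↦ fderiv ℝ (uncurry3 f) q (W q)) :
    Tphi g t x v = 0 := by
  have hfd : Differentiable ℝ (uncurry3 f) := hf.differentiable two_ne_zero
  have hXf (q : PhaseSpace n) : fderiv ℝ (uncurry3 f) q (vlasovField q) = 0 := by
    rw [← Tphi_eq_fderiv (hfd _)]
    exact hsol _ _ _
  have hgd : DifferentiableAt ℝ (uncurry3 g) (t, x, v) := by
    rw [hg]
    exact ((hf.fderiv_right le_rfl).differentiable one_ne_zero _).clm_apply hW
  rw [Tphi_eq_fderiv hgd, hg]
  exact fderiv_apply_eq_zero_of_lieBracket_eq_zero hf.contDiffAt (by simp)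
    (differentiable_vlasovField _) hW hXf hbr

def rotationGenerator (i j : Fin n) : (Fin n → ℝ) →L[ℝ] (Fin n → ℝ) :=
  (proj i).smulRight (Pi.single j 1) - (proj j).smulRight (Pi.single i 1)

variable {f : ℝ → (Fin n → ℝ) → (Fin n → ℝ) → ℝ}

-- `e^t` is written as `e^{1 * t}` to match `lieBracket_vlasovField_exp_smul`.
theorem uncurry3_Uop (hf : Differentiable ℝ (uncurry3 f)) (i : Fin n) :
    uncurry3 (Uop i f) = fun q ↦
      fderiv ℝ (uncurry3 f) q (Real.exp (1 * q.1) • ((0 : ℝ), Pi.single i 1, Pi.single i 1)) := by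
  funext ⟨t, x, v⟩
  simp [uncurry3, Uop, fderiv_uncurry3_apply (hf _), Pi.single_apply, mul_add]

theorem uncurry3_Sop (hf : Differentiable ℝ (uncurry3 f)) (i : Fin n) :
    uncurry3 (Sop i f) = fun q ↦
      fderiv ℝ (uncurry3 f) q (Real.exp (-1 * q.1) • ((0 : ℝ), Pi.single i 1, -Pi.single i 1)) := by
  funext ⟨t, x, v⟩
  simp [uncurry3, Sop, fderiv_uncurry3_apply (hf _), Pi.single_apply, mul_add, sub_eq_add_neg]

theorem uncurry3_Lop (hf : Differentiable ℝ (uncurry3 f)) :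
    uncurry3 (Lop f) = fun q ↦ fderiv ℝ (uncurry3 f) q
      ((0 : ℝ), ContinuousLinearMap.id ℝ (Fin n → ℝ) q.2.1, ContinuousLinearMap.id ℝ _ q.2.2) := by
  funext ⟨t, x, v⟩
  simp [uncurry3, Lop, fderiv_uncurry3_apply (hf _), Finset.sum_add_distrib]

theorem uncurry3_Rop (hf : Differentiable ℝ (uncurry3 f)) (i j : Fin n) :
    uncurry3 (Rop i j f) = fun q ↦ fderiv ℝ (uncurry3 f) q
      ((0 : ℝ), rotationGenerator i j q.2.1, rotationGenerator i j q.2.2) := by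
  funext ⟨t, x, v⟩
  simp [uncurry3, Rop, rotationGenerator, fderiv_uncurry3_apply (hf _), Pi.single_apply, sub_mul,
    Finset.sum_sub_distrib, add_sub_assoc]

end Vlasov

/-- if `f` is a `C²` solution of the linear Vlasov equation, then `Zf` is
again a solution for each `Z ∈ {U_i, S_i, L, R_{ij}}`. -/
theorem stmt5 {n : ℕ} (f : ℝ → (Fin n → ℝ) → (Fin n → ℝ) → ℝ)
    (hf : ContDiff ℝ 2 (fun p : ℝ × (Fin n → ℝ) × (Fin n → ℝ) => f p.1 p.2.1 p.2.2))
    (hsol : ∀ t x v, Tphi f t x v = 0) :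
    (∀ (i : Fin n), ∀ t x v, Tphi (Uop i f) t x v = 0) ∧
    (∀ (i : Fin n), ∀ t x v, Tphi (Sop i f) t x v = 0) ∧
    (∀ t x v, Tphi (Lop f) t x v = 0) ∧
    (∀ (i j : Fin n), ∀ t x v, Tphi (Rop i j f) t x v = 0) := by
  have hF : ContDiff ℝ 2 (uncurry3 f) := hf
  have hFd : Differentiable ℝ (uncurry3 f) := hF.differentiable two_ne_zero
  refine ⟨fun i t x v ↦ ?_, fun i t x v ↦ ?_, fun t x v ↦ ?_, fun i j t x v ↦ ?_⟩
  · exact Tphi_eq_zero_of_lieBracket_eq_zero hF hsol (by fun_prop)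
      (lieBracket_vlasovField_exp_smul (by simp) (by simp) _) (uncurry3_Uop hFd i)
  · exact Tphi_eq_zero_of_lieBracket_eq_zero hF hsol (by fun_prop)
      (lieBracket_vlasovField_exp_smul (by simp) (by simp) _) (uncurry3_Sop hFd i)
  · exact Tphi_eq_zero_of_lieBracket_eq_zero hF hsol (by fun_prop)
      (lieBracket_vlasovField_prodMap _ _) (uncurry3_Lop hFd)
  · exact Tphi_eq_zero_of_lieBracket_eq_zero hF hsol (by fun_prop)
      (lieBracket_vlasovField_prodMap _ _) (uncurry3_Rop hFd i j)
end

section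
/- For every n ≥ 2 there exists a constant C_n > 0 such that for all t ≥ 0 and x ∈ ℝⁿ, ∫_{ℝⁿ} dy / (|y|^{n−1} (e^t + |x−y|)ⁿ) ≤ C_n e^{−(n−1)t}. -/
/-!
Where `|y| ≤ |x - y|` the integrand is at most `K_R(|y|)`, and elsewhere at most `K_R(|x - y|)`,
where `K_R(r) = r^{-(n-1)} (R + r)^{-n}` and `R = e^t`; hence the integral is at most
`2 ∫ K_R(|y|) dy` uniformly in `x`. The substitution `y = R y'` gives
`∫ K_R(|y|) dy = R^{-(n-1)} ∫ K_1(|y|) dy`, and `K_1(|y|)` is integrable: in polar coordinates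
it becomes `(1 + r)^{-n}`, integrable on `(0, ∞)` because `n ≥ 2`.
-/

open MeasureTheory Module Set

noncomputable def euclNorm {n : ℕ} (x : Fin n → ℝ) : ℝ := Real.sqrt (∑ i, x i ^ 2)

noncomputable def radialKernel (k m : ℕ) (R r : ℝ) : ℝ := 1 / (r ^ k * (R + r) ^ m)

section radialKernel

variable {k m : ℕ} {R : ℝ}

lemma radialKernel_nonneg (hR : 0 ≤ R) {r : ℝ} (hr : 0 ≤ r) : 0 ≤ radialKernel k m R r := by
  unfold radialKernel; positivity

lemma one_div_pow_mul_add_pow_le_radialKernel_add_radialKernel (hR : 0 ≤ R) {a b : ℝ}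
    (ha : 0 < a) (hb : 0 < b) :
    1 / (a ^ k * (R + b) ^ m) ≤ radialKernel k m R a + radialKernel k m R b := by
  rcases le_total a b with hab | hba
  · refine le_add_of_le_of_nonneg ?_ (radialKernel_nonneg hR hb.le)
    exact one_div_le_one_div_of_le (by positivity) (by gcongr)
  · refine le_add_of_nonneg_of_le (radialKernel_nonneg hR ha.le) ?_
    exact one_div_le_one_div_of_le (by positivity) (by gcongr)

lemma radialKernel_one_inv_mul (hR : R ≠ 0) (r : ℝ) :
    radialKernel k m 1 (R⁻¹ * r) = R ^ (k + m) * radialKernel k m R r := by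
  have h : 1 + R⁻¹ * r = R⁻¹ * (R + r) := by field_simp
  have hden : (R⁻¹ * r) ^ k * (R⁻¹ * (R + r)) ^ m = (R ^ (k + m))⁻¹ * (r ^ k * (R + r) ^ m) := by
    rw [mul_pow, mul_pow, pow_add, mul_inv, inv_pow, inv_pow]; ring
  rw [radialKernel, radialKernel, h, hden, one_div, mul_inv, inv_inv, one_div]

end radialKernel

section HaarMeasure

variable {E : Type*} [NormedAddCommGroup E] [NormedSpace ℝ E] [FiniteDimensional ℝ E]
  [MeasurableSpace E] [BorelSpace E] (μ : Measure E) [μ.IsAddHaarMeasure] {k m : ℕ} {R : ℝ}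

lemma integral_radialKernel_norm (hR : 0 < R) :
    ∫ y, radialKernel k m R ‖y‖ ∂μ
      = R ^ finrank ℝ E / R ^ (k + m) * ∫ y, radialKernel k m 1 ‖y‖ ∂μ := by
  have h := Measure.integral_comp_inv_smul_of_nonneg μ (fun y => radialKernel k m 1 ‖y‖) hR.le
  simp only [norm_smul, norm_inv, Real.norm_of_nonneg hR.le, radialKernel_one_inv_mul hR.ne',
    integral_const_mul, smul_eq_mul] at h
  rw [div_mul_eq_mul_div, ← h]
  field_simp

lemma integrable_radialKernel_norm [Nontrivial E] (hm : 1 < m) (hR : 0 < R) :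
    Integrable (fun y => radialKernel (finrank ℝ E - 1) m R ‖y‖) μ := by
  suffices h1 : Integrable (fun y => radialKernel (finrank ℝ E - 1) m 1 ‖y‖) μ by
    refine ((h1.comp_smul (inv_ne_zero hR.ne')).const_mul (R ^ (finrank ℝ E - 1 + m))⁻¹).congr
      (.of_forall fun y => ?_)
    simp only [norm_smul, norm_inv, Real.norm_of_nonneg hR.le, radialKernel_one_inv_mul hR.ne']
    field_simp
  rw [integrable_fun_norm_addHaar μ]
  have h := integrable_one_add_norm (μ := (volume : Measure ℝ)) (r := m) (by simpa using hm)
  refine h.integrableOn.congr_fun (fun r (hr : 0 < r) => ?_) measurableSet_Ioi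
  dsimp only
  rw [Real.norm_of_nonneg hr.le, Real.rpow_neg (by positivity), Real.rpow_natCast, radialKernel,
    smul_eq_mul]
  field_simp

lemma integral_one_div_mul_add_norm_sub_le_two_mul [NullSingletonClass μ]
    (hK : Integrable (fun y => radialKernel k m R ‖y‖) μ) (hR : 0 ≤ R) (x : E) :
    ∫ y, 1 / (‖y‖ ^ k * (R + ‖x - y‖) ^ m) ∂μ ≤ 2 * ∫ y, radialKernel k m R ‖y‖ ∂μ := by
  have hpt : ∀ᵐ y ∂μ, 1 / (‖y‖ ^ k * (R + ‖x - y‖) ^ m) ≤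
      radialKernel k m R ‖y‖ + radialKernel k m R ‖x - y‖ := by
    filter_upwards [μ.ae_ne 0, μ.ae_ne x] with y hy0 hyx
    exact one_div_pow_mul_add_pow_le_radialKernel_add_radialKernel hR (norm_pos_iff.2 hy0)
      (norm_pos_iff.2 (sub_ne_zero.2 (Ne.symm hyx)))
  have hK' : Integrable (fun y => radialKernel k m R ‖x - y‖) μ := hK.comp_sub_left x
  calc ∫ y, 1 / (‖y‖ ^ k * (R + ‖x - y‖) ^ m) ∂μ
      ≤ ∫ y, (radialKernel k m R ‖y‖ + radialKernel k m R ‖x - y‖) ∂μ :=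
        integral_mono_of_nonneg (.of_forall fun y => by positivity) (hK.add hK') hpt
    _ = 2 * ∫ y, radialKernel k m R ‖y‖ ∂μ := by
        rw [integral_add hK hK', integral_sub_left_eq_self (fun y => radialKernel k m R ‖y‖) μ x]
        ring

lemma integral_one_div_mul_add_norm_sub_le_div_pow [Nontrivial E] (hm : 1 < m)
    (hR : 0 < R) (x : E) :
    ∫ y, 1 / (‖y‖ ^ (finrank ℝ E - 1) * (R + ‖x - y‖) ^ m) ∂μ
      ≤ 2 * (∫ y, radialKernel (finrank ℝ E - 1) m 1 ‖y‖ ∂μ) / R ^ (m - 1) := by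
  have hexp : finrank ℝ E - 1 + m = finrank ℝ E + (m - 1) := by
    have := finrank_pos (R := ℝ) (M := E); omega
  calc ∫ y, 1 / (‖y‖ ^ (finrank ℝ E - 1) * (R + ‖x - y‖) ^ m) ∂μ
      ≤ 2 * ∫ y, radialKernel (finrank ℝ E - 1) m R ‖y‖ ∂μ :=
        integral_one_div_mul_add_norm_sub_le_two_mul μ (integrable_radialKernel_norm μ hm hR)
          hR.le x
    _ = 2 * (∫ y, radialKernel (finrank ℝ E - 1) m 1 ‖y‖ ∂μ) / R ^ (m - 1) := by
        rw [integral_radialKernel_norm μ hR, hexp, pow_add]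
        field_simp

end HaarMeasure

lemma euclNorm_eq_norm_toLp {n : ℕ} (x : Fin n → ℝ) : euclNorm x = ‖WithLp.toLp 2 x‖ := by
  simp [euclNorm, EuclideanSpace.norm_eq]

/-- for `n ≥ 2` there is `C_n > 0` with
`∫ dy / (|y|^{n−1} (e^t + |x−y|)ⁿ) ≤ C_n e^{−(n−1)t}` for all `t ≥ 0`, `x ∈ ℝⁿ`. -/
theorem stmt10 (n : ℕ) (hn : 2 ≤ n) :
    ∃ C > 0, ∀ t : ℝ, 0 ≤ t → ∀ x : Fin n → ℝ,
      (∫ y : Fin n → ℝ, 1 / (euclNorm y ^ (n - 1) * (Real.exp t + euclNorm (x - y)) ^ n))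
        ≤ C * Real.exp (-((n : ℝ) - 1) * t) := by
  have : Nontrivial (EuclideanSpace ℝ (Fin n)) :=
    Module.nontrivial_of_finrank_pos (R := ℝ) (by simp; omega)
  set I := ∫ y : EuclideanSpace ℝ (Fin n), radialKernel (n - 1) n 1 ‖y‖
  have hI : 0 ≤ I := integral_nonneg fun y => radialKernel_nonneg zero_le_one (norm_nonneg y)
  refine ⟨2 * I + 1, by positivity, fun t _ x => ?_⟩
  have hbound := integral_one_div_mul_add_norm_sub_le_div_pow volume (by omega : 1 < n)
    (Real.exp_pos t) (WithLp.toLp 2 x)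
  rw [finrank_euclideanSpace_fin] at hbound
  have hdecay : Real.exp (-((n : ℝ) - 1) * t) = 1 / Real.exp t ^ (n - 1) := by
    rw [← Real.exp_nat_mul, one_div, ← Real.exp_neg, Nat.cast_sub (by omega)]
    ring_nf
  rw [← (EuclideanSpace.volume_preserving_symm_measurableEquiv_toLp (Fin n)).integral_comp',
    hdecay]
  simp only [euclNorm_eq_norm_toLp, MeasurableEquiv.coe_toLp_symm, WithLp.toLp_sub,
    WithLp.toLp_ofLp]
  rw [mul_one_div]
  exact hbound.trans (div_le_div_of_nonneg_right (by linarith) (by positivity))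
end

section
/- Under the hypotheses of the previous statement (F continuous with |F(t,y)| ≤ A e^{−t}), if x + v = ∫₀^∞ e^{−s} F(s, X(s,x,v)) ds, then |X(t,x,v) + V(t,x,v)| ≤ (A/2) e^{−t} for all t ≥ 0; in particular e^t(x + v − ∫₀^t e^{−s}F(s,X(s))ds) → 0 as t → ∞. -/
/-!
Put `H t = e^{-t} (X t + V t)`. The equation gives `H' = -e^{-t} F(t, X t)`; since
`H 0 = x + v = ∫_0^∞ e^{-s} F(s, X s) ds`, the fundamental theorem of calculus makes `H t` the
tail integral `∫_t^∞ e^{-s} F(s, X s) ds`. Its integrand is bounded by `A e^{-2s}`, whence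
`|H t| ≤ (A/2) e^{-2t}`, that is `|X t + V t| ≤ (A/2) e^{-t}`.
-/

open MeasureTheory Filter

open Set Real

section Euclidean

variable {n : ℕ}

lemma euclNorm_eq_norm (y : Fin n → ℝ) :
    euclNorm y = ‖(EuclideanSpace.equiv (Fin n) ℝ).symm y‖ := by
  simp [euclNorm, EuclideanSpace.norm_eq]

lemma norm_le_euclNorm (y : Fin n → ℝ) : ‖y‖ ≤ euclNorm y := by
  rw [euclNorm_eq_norm]
  exact (pi_norm_le_iff_of_nonneg (norm_nonneg _)).2 fun i => by
    simpa using PiLp.norm_apply_le ((EuclideanSpace.equiv (Fin n) ℝ).symm y) i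

lemma euclNorm_smul (c : ℝ) (y : Fin n → ℝ) : euclNorm (c • y) = |c| * euclNorm y := by
  simp only [euclNorm_eq_norm, map_smul, norm_smul, Real.norm_eq_abs]

end Euclidean

lemma integral_Ioi_const_mul_exp_neg_two_mul (A t : ℝ) :
    ∫ s in Ioi t, A * exp (-2 * s) = A / 2 * exp (-2 * t) := by
  rw [integral_const_mul, integral_exp_mul_Ioi (by norm_num) t]
  ring

section

variable {E : Type*} [NormedAddCommGroup E]

lemma integrableOn_Ioi_of_norm_le_exp_neg_two_mul {G : ℝ → E} {A t : ℝ}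
    (hGm : AEStronglyMeasurable G (volume.restrict (Ioi t)))
    (hG : ∀ s, t < s → ‖G s‖ ≤ A * exp (-2 * s)) : IntegrableOn G (Ioi t) :=
  Integrable.mono' ((integrableOn_exp_mul_Ioi (by norm_num) t).const_mul A) hGm
    ((ae_restrict_iff' measurableSet_Ioi).2 (ae_of_all _ hG))

variable [NormedSpace ℝ E]

lemma norm_integral_Ioi_le_of_norm_le_exp_neg_two_mul {G : ℝ → E} {A t : ℝ}
    (hG : ∀ s, t < s → ‖G s‖ ≤ A * exp (-2 * s)) :
    ‖∫ s in Ioi t, G s‖ ≤ A / 2 * exp (-2 * t) := by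
  rw [← integral_Ioi_const_mul_exp_neg_two_mul]
  exact norm_integral_le_of_norm_le ((integrableOn_exp_mul_Ioi (by norm_num) t).const_mul A)
    ((ae_restrict_iff' measurableSet_Ioi).2 (ae_of_all _ hG))

lemma hasDerivAt_exp_neg_smul_add {X V : ℝ → E} {f : E} {t : ℝ}
    (hX : HasDerivAt X (V t) t) (hV : HasDerivAt V (X t - f) t) :
    HasDerivAt (fun s => exp (-s) • (X s + V s)) (-(exp (-t) • f)) t := by
  refine ((hasDerivAt_neg t).exp.smul (hX.add hV)).congr_deriv ?_
  simp only [Pi.add_apply, smul_add, smul_sub, mul_neg_one, neg_smul]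
  abel

variable [CompleteSpace E]

lemma aestronglyMeasurable_of_hasDerivAt_sub {X V f : ℝ → E} {S : Set ℝ}
    (hS : MeasurableSet S) (hX : ContinuousOn X S) (hV : ∀ t ∈ S, HasDerivAt V (X t - f t) t) :
    AEStronglyMeasurable f (volume.restrict S) :=
  ((hX.aestronglyMeasurable hS).sub (stronglyMeasurable_deriv V).aestronglyMeasurable).congr
    (ae_restrict_of_forall_mem hS fun t ht => by
      rw [Pi.sub_apply, (hV t ht).deriv, sub_sub_cancel])

lemma eq_integral_Ioi_of_hasDerivAt_neg {H G : ℝ → E} {a t : ℝ}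
    (hH : ∀ s, a ≤ s → HasDerivAt H (-G s) s) (hG : IntegrableOn G (Ioi a))
    (ha : H a = ∫ s in Ioi a, G s) (ht : a ≤ t) : H t = ∫ s in Ioi t, G s := by
  have hftc : ∫ s in a..t, -G s = H t - H a :=
    intervalIntegral.integral_eq_sub_of_hasDerivAt
      (fun s hs => hH s (by rw [uIcc_of_le ht] at hs; exact hs.1))
      ((intervalIntegrable_iff_integrableOn_Ioc_of_le ht).2
        (hG.mono_set Ioc_subset_Ioi_self)).neg
  rw [intervalIntegral.integral_neg, ← intervalIntegral.integral_Ioi_sub_Ioi hG ht, ← ha,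
    neg_sub] at hftc
  exact (sub_left_inj.1 hftc).symm

end

lemma euclNorm_integral_Ioi_le {n : ℕ} {G : ℝ → Fin n → ℝ} {A t : ℝ}
    (hG : ∀ s, t < s → euclNorm (G s) ≤ A * exp (-2 * s)) :
    euclNorm (∫ s in Ioi t, G s) ≤ A / 2 * exp (-2 * t) := by
  rw [euclNorm_eq_norm, ← ContinuousLinearEquiv.integral_comp_comm]
  exact norm_integral_Ioi_le_of_norm_le_exp_neg_two_mul fun s hs => by
    simpa only [euclNorm_eq_norm] using hG s hs

theorem stmt14_general {n : ℕ} (F : ℝ → (Fin n → ℝ) → (Fin n → ℝ))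
    (A : ℝ)
    (hFbound : ∀ t : ℝ, 0 ≤ t → ∀ y : Fin n → ℝ, euclNorm (F t y) ≤ A * Real.exp (-t))
    (X V : ℝ → Fin n → ℝ) (x v : Fin n → ℝ)
    (hX0 : X 0 = x) (hV0 : V 0 = v)
    (hX : ∀ t : ℝ, 0 ≤ t → HasDerivAt X (V t) t)
    (hV : ∀ t : ℝ, 0 ≤ t → HasDerivAt V (X t - F t (X t)) t)
    (hxv : x + v = ∫ s in Set.Ioi (0:ℝ), Real.exp (-s) • F s (X s)) :
    (∀ t : ℝ, 0 ≤ t → euclNorm (X t + V t) ≤ (A / 2) * Real.exp (-t)) ∧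
    Tendsto
      (fun t => Real.exp t • (x + v - ∫ s in (0:ℝ)..t, Real.exp (-s) • F s (X s)))
      atTop (nhds 0) := by
  set G : ℝ → Fin n → ℝ := fun s => exp (-s) • F s (X s)
  have hGbound : ∀ s, 0 < s → euclNorm (G s) ≤ A * exp (-2 * s) := fun s hs => by
    rw [euclNorm_smul, abs_of_pos (exp_pos _), show -2 * s = -s + -s by ring, exp_add,
      mul_left_comm]
    exact mul_le_mul_of_nonneg_left (hFbound s hs.le _) (exp_pos _).le
  have hFX : AEStronglyMeasurable (fun s => F s (X s)) (volume.restrict (Ioi 0)) :=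
    aestronglyMeasurable_of_hasDerivAt_sub measurableSet_Ioi
      (fun t ht => (hX t ht.le).continuousAt.continuousWithinAt) fun t ht => hV t ht.le
  have hGint : IntegrableOn G (Ioi 0) :=
    integrableOn_Ioi_of_norm_le_exp_neg_two_mul
      ((continuous_exp.comp continuous_neg).aestronglyMeasurable.smul hFX)
      fun s hs => (norm_le_euclNorm _).trans (hGbound s hs)
  have htail : ∀ t, 0 ≤ t → exp (-t) • (X t + V t) = ∫ s in Ioi t, G s := fun t ht =>
    eq_integral_Ioi_of_hasDerivAt_neg (G := G)
      (fun s hs => hasDerivAt_exp_neg_smul_add (hX s hs) (hV s hs))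
      hGint (by simp only [neg_zero, exp_zero, one_smul, hX0, hV0, hxv]) ht
  have hbound : ∀ t, 0 ≤ t → euclNorm (X t + V t) ≤ A / 2 * exp (-t) := fun t ht => by
    have h := euclNorm_integral_Ioi_le fun s hs => hGbound s (ht.trans_lt hs)
    rwa [← htail t ht, euclNorm_smul, abs_of_pos (exp_pos _), show -2 * t = -t + -t by ring,
      exp_add, ← mul_assoc, mul_comm _ (exp (-t)), mul_le_mul_iff_right₀ (exp_pos _)] at h
  have hsol : ∀ t, 0 ≤ t → exp t • (x + v - ∫ s in (0:ℝ)..t, G s) = X t + V t := by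
    intro t ht
    rw [hxv, ← intervalIntegral.integral_Ioi_sub_Ioi hGint ht, sub_sub_cancel, ← htail t ht,
      smul_smul, ← exp_add, add_neg_cancel, exp_zero, one_smul]
  refine ⟨hbound, squeeze_zero_norm' (a := fun t => A / 2 * exp (-t)) ?_ ?_⟩
  · filter_upwards [eventually_ge_atTop 0] with t ht
    rw [hsol t ht]
    exact (norm_le_euclNorm _).trans (hbound t ht)
  · simpa using tendsto_exp_neg_atTop_nhds_zero.const_mul (A / 2)

/-- if `x + v = ∫₀^∞ e^{−s} F(s,X(s)) ds`, then
`|X(t)+V(t)| ≤ (A/2) e^{−t}` for all `t ≥ 0`, and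
`e^t (x + v − ∫₀^t e^{−s} F(s,X(s)) ds) → 0` as `t → ∞`. -/
theorem stmt14 {n : ℕ} (F : ℝ → (Fin n → ℝ) → (Fin n → ℝ))
    (hF : Continuous (fun p : ℝ × (Fin n → ℝ) => F p.1 p.2))
    (A : ℝ) (hA : 0 < A)
    (hFbound : ∀ t : ℝ, 0 ≤ t → ∀ y : Fin n → ℝ, euclNorm (F t y) ≤ A * Real.exp (-t))
    (X V : ℝ → Fin n → ℝ) (x v : Fin n → ℝ)
    (hX0 : X 0 = x) (hV0 : V 0 = v)
    (hX : ∀ t : ℝ, 0 ≤ t → HasDerivAt X (V t) t)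
    (hV : ∀ t : ℝ, 0 ≤ t → HasDerivAt V (X t - F t (X t)) t)
    (hxv : x + v = ∫ s in Set.Ioi (0:ℝ), Real.exp (-s) • F s (X s)) :
    (∀ t : ℝ, 0 ≤ t → euclNorm (X t + V t) ≤ (A / 2) * Real.exp (-t)) ∧
    Tendsto
      (fun t => Real.exp t • (x + v - ∫ s in (0:ℝ)..t, Real.exp (-s) • F s (X s)))
      atTop (nhds 0) :=
  stmt14_general F A hFbound X V x v hX0 hV0 hX hV hxv
end
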